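/- The qutrit ReMAD channels with γ_{10}=1 or with γ_{21}+γ_{20}=1 are not degradable: in the first case |1⟩⟨2| lies in ker Φ_Γ but not in ker Φ̃_Γ when γ_{21}>0 or γ_{20}>0 appropriately; in the case γ_{21}+γ_{20}=1 the matrix unit |0⟩⟨2| lies in ker Φ_Γ but (when γ_{20}>0) not in ker Φ̃_Γ, so ker Φ_Γ ⊄ ker Φ̃_Γ and no LCPTP degrading map D with Φ̃_Γ = D ∘ Φ_Γ can exist. -/

import Mathlib

open Matrix
open scoped BigOperators
/-- First qutrit ReMAD Kraus operator `K^{(0)} = diag(1, √(1-γ₁₀), √(1-γ₂₁-γ₂₀))`. -/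
noncomputable def K0 (g10 g21 g20 : ℝ) : Matrix (Fin 3) (Fin 3) ℂ :=
  !![(1 : ℂ), 0, 0;
     0, ((Real.sqrt (1 - g10) : ℝ) : ℂ), 0;
     0, 0, ((Real.sqrt (1 - g21 - g20) : ℝ) : ℂ)]

/-- Second qutrit ReMAD Kraus operator `K^{(1)} = √γ₁₀ |0⟩⟨1| + √γ₂₁ |1⟩⟨2|`. -/
noncomputable def K1 (g10 g21 : ℝ) : Matrix (Fin 3) (Fin 3) ℂ :=
  !![(0 : ℂ), ((Real.sqrt g10 : ℝ) : ℂ), 0;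
     0, 0, ((Real.sqrt g21 : ℝ) : ℂ);
     0, 0, 0]

/-- Third qutrit ReMAD Kraus operator `K^{(2)} = √γ₂₀ |0⟩⟨2|`. -/
noncomputable def K2 (g20 : ℝ) : Matrix (Fin 3) (Fin 3) ℂ :=
  !![(0 : ℂ), 0, ((Real.sqrt g20 : ℝ) : ℂ);
     0, 0, 0;
     0, 0, 0]

/-- The qutrit ReMAD channel `Φ_Γ(ρ) = Σ_{i=0}^{2} K^{(i)} ρ K^{(i)†}`. -/
noncomputable def Phi (g10 g21 g20 : ℝ) (ρ : Matrix (Fin 3) (Fin 3) ℂ) :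
    Matrix (Fin 3) (Fin 3) ℂ :=
  K0 g10 g21 g20 * ρ * (K0 g10 g21 g20)ᴴ + K1 g10 g21 * ρ * (K1 g10 g21)ᴴ +
    K2 g20 * ρ * (K2 g20)ᴴ

/-- The complementary channel of the qutrit ReMAD channel,
`Φ̃_Γ(ρ)_{e,e'} = Tr(K^{(e)} ρ K^{(e')†})`. -/
noncomputable def PhiC (g10 g21 g20 : ℝ) (ρ : Matrix (Fin 3) (Fin 3) ℂ) :
    Matrix (Fin 3) (Fin 3) ℂ :=
  Matrix.of fun e e' : Fin 3 =>
    Matrix.trace ((![K0 g10 g21 g20, K1 g10 g21, K2 g20] e) * ρ *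
      (![K0 g10 g21 g20, K1 g10 g21, K2 g20] e')ᴴ)

/-!
For a matrix unit `E = |i⟩⟨j|` and Kraus operators `Kₖ`, every term `Kₖ E Kₖ†` is the rank-one
matrix `(Kₖ eᵢ)(Kₖ eⱼ)†`, and `Tr(Kₖ E Kₗ†) = ⟨Kₗ eⱼ, Kₖ eᵢ⟩`. So `Φ_Γ(E) = 0` as soon as every
Kraus operator kills `eᵢ` or `eⱼ`, while `Φ̃_Γ(E) ≠ 0` as soon as two Kraus operators send `eᵢ`
and `eⱼ` to non-orthogonal vectors. For `|1⟩⟨2|` with `γ₁₀ = 1, γ₂₁ = 0` these are `K⁽¹⁾e₁ = e₀`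
and `K⁽²⁾e₂ = √γ₂₀ e₀`; for `|0⟩⟨2|` with `γ₂₁ + γ₂₀ = 1` they are `K⁽⁰⁾e₀ = e₀` and `K⁽²⁾e₂`.
-/

namespace Matrix

variable {m n : Type*} [Fintype n] [DecidableEq n] {α : Type*} [Semiring α] [StarRing α]

theorem mul_single_one_mul_conjTranspose (A B : Matrix m n α) (i j : n) :
    A * single i j (1 : α) * Bᴴ = vecMulVec (A.col i) (star (B.col j)) := by
  rw [single_eq_single_vecMulVec_single, mul_vecMulVec, vecMulVec_mul, mulVec_single_one,
    vecMul_conjTranspose, Pi.star_single, star_one, mulVec_single_one]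

theorem trace_mul_single_one_mul_conjTranspose [Fintype m] (A B : Matrix m n α) (i j : n) :
    trace (A * single i j (1 : α) * Bᴴ) = A.col i ⬝ᵥ star (B.col j) := by
  rw [mul_single_one_mul_conjTranspose, trace_vecMulVec]

theorem sum_mul_single_one_mul_conjTranspose_eq_zero {ι : Type*} [Fintype ι]
    {K : ι → Matrix m n α} {i j : n} (h : ∀ k, (K k).col i = 0 ∨ (K k).col j = 0) :
    ∑ k, K k * single i j (1 : α) * (K k)ᴴ = 0 := by
  refine Finset.sum_eq_zero fun k _ => ?_
  rw [mul_single_one_mul_conjTranspose]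
  rcases h k with h | h <;> simp [h]

end Matrix

open Matrix

noncomputable def remadKraus (g10 g21 g20 : ℝ) : Fin 3 → Matrix (Fin 3) (Fin 3) ℂ :=
  ![K0 g10 g21 g20, K1 g10 g21, K2 g20]

theorem Phi_eq_sum (g10 g21 g20 : ℝ) (ρ : Matrix (Fin 3) (Fin 3) ℂ) :
    Phi g10 g21 g20 ρ = ∑ k, remadKraus g10 g21 g20 k * ρ * (remadKraus g10 g21 g20 k)ᴴ := by
  simp [Phi, remadKraus, Fin.sum_univ_three]

theorem PhiC_apply (g10 g21 g20 : ℝ) (ρ : Matrix (Fin 3) (Fin 3) ℂ) (e e' : Fin 3) :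
    PhiC g10 g21 g20 ρ e e' =
      trace (remadKraus g10 g21 g20 e * ρ * (remadKraus g10 g21 g20 e')ᴴ) :=
  rfl

theorem Phi_one_zero_single_one_two_eq_zero (g20 : ℝ) : Phi 1 0 g20 (single 1 2 1) = 0 := by
  rw [Phi_eq_sum]
  refine sum_mul_single_one_mul_conjTranspose_eq_zero fun k => ?_
  fin_cases k
  · left; ext a; fin_cases a <;> simp [remadKraus, K0]
  · right; ext a; fin_cases a <;> simp [remadKraus, K1]
  · left; ext a; fin_cases a <;> simp [remadKraus, K2]

theorem Phi_single_zero_two_eq_zero_of_add_eq_one (g10 g21 g20 : ℝ) (h : g21 + g20 = 1) :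
    Phi g10 g21 g20 (single 0 2 1) = 0 := by
  have h0 : 1 - g21 - g20 = 0 := by linarith
  rw [Phi_eq_sum]
  refine sum_mul_single_one_mul_conjTranspose_eq_zero fun k => ?_
  fin_cases k
  · right; ext a; fin_cases a <;> simp [remadKraus, K0, h0]
  · left; ext a; fin_cases a <;> simp [remadKraus, K1]
  · left; ext a; fin_cases a <;> simp [remadKraus, K2]

theorem PhiC_single_one_two_apply (g10 g21 g20 : ℝ) :
    PhiC g10 g21 g20 (single 1 2 1) 1 2 = (√g10 * √g20 : ℝ) := by
  rw [PhiC_apply, trace_mul_single_one_mul_conjTranspose]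
  simp [remadKraus, K1, K2, dotProduct, Fin.sum_univ_three]

theorem PhiC_single_zero_two_apply (g10 g21 g20 : ℝ) :
    PhiC g10 g21 g20 (single 0 2 1) 0 2 = (√g20 : ℝ) := by
  rw [PhiC_apply, trace_mul_single_one_mul_conjTranspose]
  simp [remadKraus, K0, K2, dotProduct, Fin.sum_univ_three]

theorem qutrit_remad_not_degradable_general (g10 g21 g20 : ℝ) :
    ((g10 = 1 ∧ g21 = 0 ∧ 0 < g20) →
      Phi g10 g21 g20 (Matrix.single 1 2 (1 : ℂ)) = 0 ∧
        PhiC g10 g21 g20 (Matrix.single 1 2 (1 : ℂ)) ≠ 0 ∧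
        ¬ (∀ ρ : Matrix (Fin 3) (Fin 3) ℂ,
            Phi g10 g21 g20 ρ = 0 → PhiC g10 g21 g20 ρ = 0)) ∧
    ((g21 + g20 = 1 ∧ 0 < g20) →
      Phi g10 g21 g20 (Matrix.single 0 2 (1 : ℂ)) = 0 ∧
        PhiC g10 g21 g20 (Matrix.single 0 2 (1 : ℂ)) ≠ 0 ∧
        ¬ (∀ ρ : Matrix (Fin 3) (Fin 3) ℂ,
            Phi g10 g21 g20 ρ = 0 → PhiC g10 g21 g20 ρ = 0)) := by
  constructor
  · rintro ⟨rfl, rfl, hpos⟩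
    have hker := Phi_one_zero_single_one_two_eq_zero g20
    have hne : PhiC 1 0 g20 (single 1 2 1) ≠ 0 := fun h => by
      simpa [PhiC_single_one_two_apply, (Real.sqrt_pos.2 hpos).ne'] using congrFun₂ h 1 2
    exact ⟨hker, hne, fun hsub => hne (hsub _ hker)⟩
  · rintro ⟨hsum, hpos⟩
    have hker := Phi_single_zero_two_eq_zero_of_add_eq_one g10 g21 g20 hsum
    have hne : PhiC g10 g21 g20 (single 0 2 1) ≠ 0 := fun h => by
      simpa [PhiC_single_zero_two_apply, (Real.sqrt_pos.2 hpos).ne'] using congrFun₂ h 0 2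
    exact ⟨hker, hne, fun hsub => hne (hsub _ hker)⟩

/-- The qutrit ReMAD channels with `γ₁₀ = 1` or with `γ₂₁ + γ₂₀ = 1` are not degradable.
First case (`γ₁₀ = 1`, with `γ₂₁ = 0` and `γ₂₀ > 0` appropriately): the matrix unit
`|1⟩⟨2|` lies in `ker Φ_Γ` but not in `ker Φ̃_Γ`. Second case (`γ₂₁ + γ₂₀ = 1`, with
`γ₂₀ > 0`): the matrix unit `|0⟩⟨2|` lies in `ker Φ_Γ` but not in `ker Φ̃_Γ`. In both
cases `ker Φ_Γ ⊄ ker Φ̃_Γ`, so no LCPTP degrading map `D` with `Φ̃_Γ = D ∘ Φ_Γ`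
can exist. -/
theorem qutrit_remad_not_degradable (g10 g21 g20 : ℝ)
    (h10 : 0 ≤ g10) (h10' : g10 ≤ 1) (h21 : 0 ≤ g21) (h21' : g21 ≤ 1)
    (h20 : 0 ≤ g20) (h20' : g20 ≤ 1) (hsum : g21 + g20 ≤ 1) :
    ((g10 = 1 ∧ g21 = 0 ∧ 0 < g20) →
      Phi g10 g21 g20 (Matrix.single 1 2 (1 : ℂ)) = 0 ∧
        PhiC g10 g21 g20 (Matrix.single 1 2 (1 : ℂ)) ≠ 0 ∧
        ¬ (∀ ρ : Matrix (Fin 3) (Fin 3) ℂ,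
            Phi g10 g21 g20 ρ = 0 → PhiC g10 g21 g20 ρ = 0)) ∧
    ((g21 + g20 = 1 ∧ 0 < g20) →
      Phi g10 g21 g20 (Matrix.single 0 2 (1 : ℂ)) = 0 ∧
        PhiC g10 g21 g20 (Matrix.single 0 2 (1 : ℂ)) ≠ 0 ∧
        ¬ (∀ ρ : Matrix (Fin 3) (Fin 3) ℂ,
            Phi g10 g21 g20 ρ = 0 → PhiC g10 g21 g20 ρ = 0)) :=
  qutrit_remad_not_degradable_general g10 g21 g20
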